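/- arXiv:0803.1612 — 2 statements merged into one kernel-verified Lean document; each statement's English description precedes it below -/
import Mathlib

section
/- The map from the free group on two generators to GL(2, ℛ) sending the generators to M₁ and M₂ factors through the free metabelian group of rank 2; i.e., the group F(ℛ) = ⟨M₁, M₂⟩ is metabelian (its commutator subgroup is abelian). -/
open Matrix Finset

noncomputable section

/-- The Laurent polynomial ring `ℛ = ℤ[x, x⁻¹, y, y⁻¹]`, realized as the group
algebra of `ℤ × ℤ` over `ℤ`. -/
abbrev R2 : Type := AddMonoidAlgebra ℤ (ℤ × ℤ)

/-- The positive units `x^i y^j` of `ℛ`, as a homomorphism from `ℤ × ℤ`. -/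
def U : Multiplicative (ℤ × ℤ) →* R2ˣ :=
  (Units.map (AddMonoidAlgebra.of ℤ (ℤ × ℤ))).comp toUnits.toMonoidHom

/-- `x` as a unit of `ℛ`. -/
def xu : R2ˣ := U (Multiplicative.ofAdd (1, 0))
/-- `y` as a unit of `ℛ`. -/
def yu : R2ˣ := U (Multiplicative.ofAdd (0, 1))
/-- `x ∈ ℛ`. -/
def Xr : R2 := xu
/-- `y ∈ ℛ`. -/
def Yr : R2 := yu

/-- The augmentation map `ℛ → ℤ`, `x, y ↦ 1`. -/
def aug : R2 →+* ℤ := ((AddMonoidAlgebra.lift ℤ ℤ (ℤ × ℤ)) 1).toRingHom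

/-- The augmentation ideal `Σ` of `ℛ`. -/
def Saug : Ideal R2 := RingHom.ker aug

/-- The `n`-cyclotomic ideal `𝒥(n)` of `ℛ`, generated by `1 + u + ⋯ + u^(n-1)` for
positive units `u`. -/
def Cyc (n : ℕ) : Ideal R2 :=
  Ideal.span {r | ∃ m : Multiplicative (ℤ × ℤ), r = ∑ i ∈ Finset.range n, ((U m : R2)) ^ i}

/-- The matrix `M₁`. -/
def M1 : Matrix (Fin 2) (Fin 2) R2 := !![1, 1 - Yr; 0, Xr]
/-- The matrix `M₂`. -/
def M2 : Matrix (Fin 2) (Fin 2) R2 := !![Yr, 0; 1 - Xr, 1]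

/-- The matrix `[λᵢ v]` with rows `λᵢ • (1-x, 1-y)`. -/
def Nmat (a b : R2) : Matrix (Fin 2) (Fin 2) R2 :=
  !![a * (1 - Xr), a * (1 - Yr); b * (1 - Xr), b * (1 - Yr)]

/-- The row vector `v = (1-x, 1-y)`. -/
def vv : Fin 2 → R2 := ![1 - Xr, 1 - Yr]

end

/-! Both generators fix the row vector `v = (1-x, 1-y)` from the right and scale the column
vector `u = (1-y, x-1)` by the units `x`, `y`; scalars commute, so every commutator fixes both
`v` and `u`. Writing such a matrix as `1 + N`, the matrix `N` kills `u` and its columns are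
orthogonal to `v`. As `v ⬝ u = 0` and `ℛ` is a domain, this forces `N N' = 0` for any two such
matrices, so `(1 + N)(1 + N') = 1 + N + N'` is symmetric in `N, N'`. -/

open scoped commutatorElement

namespace Matrix

section Stabilizers

variable {n R : Type*} [Fintype n] [DecidableEq n] [CommRing R]

def vecMulStabilizer (v : n → R) : Subgroup (Matrix n n R)ˣ where
  carrier := {g | v ᵥ* (g : Matrix n n R) = v}
  one_mem' := vecMul_one v
  mul_mem' {g h} hg hh := by
    rw [Set.mem_ofPred_eq, Units.val_mul, ← vecMul_vecMul, hg, hh]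
  inv_mem' {g} hg := by
    rw [Set.mem_ofPred_eq, ← hg, vecMul_vecMul, Units.mul_inv, vecMul_one, hg]

def mulVecStabilizer (u : n → R) : Subgroup (Matrix n n R)ˣ where
  carrier := {g | (g : Matrix n n R) *ᵥ u = u}
  one_mem' := one_mulVec u
  mul_mem' {g h} hg hh := by
    rw [Set.mem_ofPred_eq, Units.val_mul, ← mulVec_mulVec, hh, hg]
  inv_mem' {g} hg := by
    rw [Set.mem_ofPred_eq, ← hg, mulVec_mulVec, Units.inv_mul, one_mulVec, hg]

lemma units_inv_mulVec_eq_smul {g : (Matrix n n R)ˣ} {u : n → R} {d : Rˣ}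
    (h : (g : Matrix n n R) *ᵥ u = d • u) :
    (↑g⁻¹ : Matrix n n R) *ᵥ u = d⁻¹ • u := by
  rw [eq_inv_smul_iff, Units.smul_def, ← mulVec_smul, ← Units.smul_def, ← h, mulVec_mulVec,
    Units.inv_mul, one_mulVec]

def eigenlineStabilizer (u : n → R) : Subgroup (Matrix n n R)ˣ where
  carrier := {g | ∃ d : Rˣ, (g : Matrix n n R) *ᵥ u = d • u}
  one_mem' := ⟨1, by rw [Units.val_one, one_mulVec, one_smul]⟩
  mul_mem' {g h} := by
    rintro ⟨c, hc⟩ ⟨d, hd⟩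
    refine ⟨c * d, ?_⟩
    rw [Units.val_mul, ← mulVec_mulVec, hd, Units.smul_def, mulVec_smul, hc, ← Units.smul_def,
      smul_smul, mul_comm]
  inv_mem' {g} := by
    rintro ⟨d, hd⟩
    exact ⟨d⁻¹, units_inv_mulVec_eq_smul hd⟩

lemma commutatorElement_mem_mulVecStabilizer {u : n → R} {g h : (Matrix n n R)ˣ}
    (hg : g ∈ eigenlineStabilizer u) (hh : h ∈ eigenlineStabilizer u) :
    ⁅g, h⁆ ∈ mulVecStabilizer u := by
  obtain ⟨c, hc⟩ := hg
  obtain ⟨d, hd⟩ := hh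
  change (↑(g * h * g⁻¹ * h⁻¹) : Matrix n n R) *ᵥ u = u
  simp only [Units.val_mul, ← mulVec_mulVec, units_inv_mulVec_eq_smul hc,
    units_inv_mulVec_eq_smul hd, mulVec_smul, hc, hd, smul_smul]
  rw [mul_comm d c, inv_mul_cancel_left, inv_mul_cancel, one_smul]

lemma commutator_le_vecMulStabilizer_inf_mulVecStabilizer (v u : n → R) :
    ⁅vecMulStabilizer v ⊓ eigenlineStabilizer u, vecMulStabilizer v ⊓ eigenlineStabilizer u⁆
      ≤ vecMulStabilizer v ⊓ mulVecStabilizer u := by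
  rw [Subgroup.commutator_le]
  intro g hg h hh
  obtain ⟨hgv, hgu⟩ := Subgroup.mem_inf.mp hg
  obtain ⟨hhv, hhu⟩ := Subgroup.mem_inf.mp hh
  refine Subgroup.mem_inf.mpr ⟨?_, commutatorElement_mem_mulVecStabilizer hgu hhu⟩
  rw [commutatorElement_def]
  exact mul_mem (mul_mem (mul_mem hgv hhv) (inv_mem hgv)) (inv_mem hhv)

end Stabilizers

section TwoByTwo

variable {R : Type*} [CommRing R] [IsDomain R]

/-- Over a domain, `b` times a vector orthogonal to `(a, b)` is a multiple of `(b, -a)`, so `N`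
kills every column of `P`. -/
lemma mul_eq_zero_of_mulVec_eq_zero_of_vecMul_eq_zero {a b : R} (hb : b ≠ 0)
    {N P : Matrix (Fin 2) (Fin 2) R} (hN : N *ᵥ ![b, -a] = 0) (hP : ![a, b] ᵥ* P = 0) :
    N * P = 0 := by
  ext i j
  have hNi := congrFun hN i
  have hPj := congrFun hP j
  simp only [mulVec, vecMul, dotProduct, Fin.sum_univ_two, cons_val_zero, cons_val_one,
    Pi.zero_apply] at hNi hPj
  refine (mul_eq_zero_iff_left hb).mp ?_
  rw [mul_apply, Fin.sum_univ_two]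
  linear_combination P 0 j * hNi + N i 1 * hPj

lemma sub_one_mul_sub_one_eq_zero {a b : R} (hb : b ≠ 0) {g h : (Matrix (Fin 2) (Fin 2) R)ˣ}
    (hg : g ∈ mulVecStabilizer ![b, -a]) (hh : h ∈ vecMulStabilizer ![a, b]) :
    ((g : Matrix (Fin 2) (Fin 2) R) - 1) * ((h : Matrix (Fin 2) (Fin 2) R) - 1) = 0 := by
  refine mul_eq_zero_of_mulVec_eq_zero_of_vecMul_eq_zero (a := a) hb ?_ ?_
  · rw [sub_mulVec, one_mulVec, sub_eq_zero]; exact hg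
  · rw [vecMul_sub, vecMul_one, sub_eq_zero]; exact hh

lemma commute_of_mem_vecMulStabilizer_inf_mulVecStabilizer {a b : R} (hb : b ≠ 0)
    {g h : (Matrix (Fin 2) (Fin 2) R)ˣ}
    (hg : g ∈ vecMulStabilizer ![a, b] ⊓ mulVecStabilizer ![b, -a])
    (hh : h ∈ vecMulStabilizer ![a, b] ⊓ mulVecStabilizer ![b, -a]) :
    Commute g h := by
  obtain ⟨hgv, hgu⟩ := Subgroup.mem_inf.mp hg
  obtain ⟨hhv, hhu⟩ := Subgroup.mem_inf.mp hh
  have hgh := sub_one_mul_sub_one_eq_zero hb hgu hhv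
  have hhg := sub_one_mul_sub_one_eq_zero hb hhu hgv
  refine Commute.units_of_val ?_
  calc (g : Matrix (Fin 2) (Fin 2) R) * h = (g - 1) * (h - 1) + g + h - 1 := by noncomm_ring
    _ = (h - 1) * (g - 1) + h + g - 1 := by rw [hgh, hhg]; abel
    _ = h * g := by noncomm_ring

end TwoByTwo

end Matrix

lemma one_sub_Yr_ne_zero : (1 : R2) - Yr ≠ 0 := by
  have hY : Yr = AddMonoidAlgebra.single ((0 : ℤ), (1 : ℤ)) (1 : ℤ) := by
    simp [Yr, yu, U, AddMonoidAlgebra.of_apply]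
  rw [hY, AddMonoidAlgebra.one_def, sub_ne_zero, Ne, AddMonoidAlgebra.single_inj]
  simp [Prod.ext_iff]

noncomputable def uu : Fin 2 → R2 := ![1 - Yr, -(1 - Xr)]

lemma vv_vecMul_M1 : vv ᵥ* M1 = vv := by
  funext j; fin_cases j <;> simp [vv, M1, vecMul, dotProduct]; ring

lemma vv_vecMul_M2 : vv ᵥ* M2 = vv := by
  funext j; fin_cases j <;> simp [vv, M2, vecMul, dotProduct]; ring

lemma M1_mulVec_uu : M1 *ᵥ uu = xu • uu := by
  funext i; fin_cases i <;> simp [uu, M1, Xr, mulVec, dotProduct, Units.smul_def]; ring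

lemma M2_mulVec_uu : M2 *ᵥ uu = yu • uu := by
  funext i; fin_cases i <;> simp [uu, M2, Yr, mulVec, dotProduct, Units.smul_def]; ring

lemma mem_vecMulStabilizer_inf_eigenlineStabilizer_of_val_eq {m : (Matrix (Fin 2) (Fin 2) R2)ˣ}
    {M : Matrix (Fin 2) (Fin 2) R2} (hm : (m : Matrix (Fin 2) (Fin 2) R2) = M)
    (hv : vv ᵥ* M = vv) {d : R2ˣ} (hu : M *ᵥ uu = d • uu) :
    m ∈ vecMulStabilizer vv ⊓ eigenlineStabilizer uu :=
  Subgroup.mem_inf.mpr ⟨show vv ᵥ* (m : Matrix (Fin 2) (Fin 2) R2) = vv from hm ▸ hv, d,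
    show (m : Matrix (Fin 2) (Fin 2) R2) *ᵥ uu = d • uu from hm ▸ hu⟩

/-- The group `F(ℛ) = ⟨M₁, M₂⟩` is metabelian: its commutator subgroup is abelian.
(Hence the map from the free group on two generators sending the generators to
`M₁, M₂` factors through the free metabelian group of rank 2.) -/
theorem FR_metabelian
    (m1 m2 : (Matrix (Fin 2) (Fin 2) R2)ˣ)
    (h1 : (m1 : Matrix (Fin 2) (Fin 2) R2) = M1)
    (h2 : (m2 : Matrix (Fin 2) (Fin 2) R2) = M2) :
    ∀ g ∈ ⁅Subgroup.closure {m1, m2}, Subgroup.closure {m1, m2}⁆,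
      ∀ h ∈ ⁅Subgroup.closure {m1, m2}, Subgroup.closure {m1, m2}⁆,
        Commute g h := by
  set C := Subgroup.closure {m1, m2}
  have hC : C ≤ vecMulStabilizer vv ⊓ eigenlineStabilizer uu := by
    rw [Subgroup.closure_le, Set.insert_subset_iff, Set.singleton_subset_iff]
    exact ⟨mem_vecMulStabilizer_inf_eigenlineStabilizer_of_val_eq h1 vv_vecMul_M1 M1_mulVec_uu,
      mem_vecMulStabilizer_inf_eigenlineStabilizer_of_val_eq h2 vv_vecMul_M2 M2_mulVec_uu⟩
  have hC' : ⁅C, C⁆ ≤ vecMulStabilizer vv ⊓ mulVecStabilizer uu :=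
    (Subgroup.commutator_mono hC hC).trans
      (commutator_le_vecMulStabilizer_inf_mulVecStabilizer _ _)
  intro g hg h hh
  exact commute_of_mem_vecMulStabilizer_inf_mulVecStabilizer one_sub_Yr_ne_zero (hC' hg) (hC' hh)
end

section
/- If M = uI + N is an element of the j-th term of the lower central series of F(ℛ) (j ≥ 2), then the coefficients λ₁, λ₂ of N (with rows λᵢ·(1-x, 1-y)) lie in Σ^{j-1}, the (j-1)-st power of the augmentation ideal. -/
open Matrix Finset

/-- The lower central series of a subgroup `H`: `lcs H 0 = H = G₁` and
`lcs H j = [H, lcs H (j-1)]`, so `lcs H (j-1)` is the `j`-th term `G_j`. -/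
def lcs {G : Type*} [Group G] (H : Subgroup G) : ℕ → Subgroup G
  | 0 => H
  | j + 1 => ⁅H, lcs H j⁆

/-! Both generators have the form `u • 1 + c vᵀ` with `u` a unit and `v = (1 - x, 1 - y)`, and
such matrices form a group. Writing `g = u • 1 + a vᵀ` and `h = u' • 1 + c vᵀ`, one finds
`g h = h g + ((v ⬝ c) a - (v ⬝ a) c) vᵀ`, so `⁅g, h⁆ = (g h) (h g)⁻¹` is again of this form with
column a multiple of `(v ⬝ c) a - (v ⬝ a) c`. The entries of `v` lie in `Σ`, so taking a
commutator with a generator raises the `Σ`-adic order of the column by one. Since `ℛ` is a domain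
and `1 - x, 1 - y ≠ 0`, the column `c` is determined by the matrix, hence equals `(λ₁, λ₂)`. -/

theorem lcs_le_of_commutator_le {G : Type*} [Group G] {H : Subgroup G} {F : ℕ → Subgroup G}
    (h0 : H ≤ F 0) (hstep : ∀ k, ⁅H, F k⁆ ≤ F (k + 1)) : ∀ k, lcs H k ≤ F k
  | 0 => h0
  | k + 1 => (Subgroup.commutator_mono le_rfl (lcs_le_of_commutator_le h0 hstep k)).trans (hstep k)

namespace Matrix

variable {n R : Type*} [CommRing R]

theorem vecMulVec_left_eq_of_smul_one_add_eq [DecidableEq n] [NoZeroDivisors R] {u u' : R}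
    {c c' v : n → R} (hv : ∀ i, ∃ j ≠ i, v j ≠ 0)
    (h : u • 1 + vecMulVec c v = u' • 1 + vecMulVec c' v) : c = c' := by
  funext i
  obtain ⟨j, hji, hvj⟩ := hv i
  have hij := congrFun (congrFun h i) j
  simp only [add_apply, smul_apply, one_apply_ne hji.symm, smul_zero, zero_add,
    vecMulVec_apply] at hij
  exact mul_right_cancel₀ hvj hij

variable [Fintype n]

theorem dotProduct_mem_mul {I J : Ideal R} {v c : n → R} (hv : ∀ i, v i ∈ I) (hc : ∀ i, c i ∈ J) :
    v ⬝ᵥ c ∈ I * J :=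
  Ideal.sum_mem _ fun i _ => Ideal.mul_mem_mul (hv i) (hc i)

variable [DecidableEq n]

theorem smul_one_add_vecMulVec_mul (u u' : R) (a c v : n → R) :
    (u • 1 + vecMulVec a v) * (u' • 1 + vecMulVec c v) =
      (u * u') • 1 + vecMulVec (u • c + u' • a + (v ⬝ᵥ c) • a) v := by
  simp only [add_mul, mul_add, smul_mul_smul_comm, Matrix.one_mul, Matrix.mul_one, Matrix.smul_mul,
    Matrix.mul_smul, vecMulVec_mul_vecMulVec, vecMulVec_smul, add_vecMulVec, smul_vecMulVec]
  abel

theorem det_smul_one_add_vecMulVec (u : Rˣ) (c v : n → R) :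
    det ((u : R) • 1 + vecMulVec c v) =
      (u : R) ^ Fintype.card n * (1 + ((u⁻¹ : Rˣ) : R) * (v ⬝ᵥ c)) := by
  have hfactor : (u : R) • (1 : Matrix n n R) + vecMulVec c v =
      (u : R) • (1 + vecMulVec (((u⁻¹ : Rˣ) : R) • c) v) := by
    rw [smul_add, smul_vecMulVec, smul_smul, Units.mul_inv, one_smul]
  rw [hfactor, det_smul, vecMulVec_eq Unit, det_one_add_replicateCol_mul_replicateRow,
    dotProduct_smul, smul_eq_mul]

theorem isUnit_add_dotProduct_of_isUnit_det {u : Rˣ} {c v : n → R}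
    (h : IsUnit (det ((u : R) • 1 + vecMulVec c v))) : IsUnit ((u : R) + v ⬝ᵥ c) := by
  rw [det_smul_one_add_vecMulVec] at h
  have hunit := u.isUnit.mul (isUnit_of_mul_isUnit_right h)
  rwa [mul_add, mul_one, Units.mul_inv_cancel_left] at hunit

theorem exists_val_inv_eq_smul_one_add_vecMulVec {M : (Matrix n n R)ˣ} {u : Rˣ} {a v : n → R}
    (hM : (M : Matrix n n R) = (u : R) • 1 + vecMulVec a v) :
    ∃ s : R, ((M⁻¹ : (Matrix n n R)ˣ) : Matrix n n R) =
      ((u⁻¹ : Rˣ) : R) • 1 + vecMulVec (s • a) v := by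
  have hdet : IsUnit (det (M : Matrix n n R)) := (isUnit_iff_isUnit_det _).mp M.isUnit
  rw [hM] at hdet
  obtain ⟨w, hw⟩ := isUnit_add_dotProduct_of_isUnit_det hdet
  set s : R := -(((u⁻¹ : Rˣ) : R) * ((w⁻¹ : Rˣ) : R))
  have hs : (u : R) * s + ((u⁻¹ : Rˣ) : R) + s * (v ⬝ᵥ a) = 0 := by
    linear_combination (-s) * hw + (-((u⁻¹ : Rˣ) : R)) * w.inv_mul
  refine ⟨s, Units.inv_eq_of_mul_eq_one_right ?_⟩
  rw [hM, smul_one_add_vecMulVec_mul, Units.mul_inv, dotProduct_smul, smul_eq_mul]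
  have hcoeff : (u : R) • s • a + ((u⁻¹ : Rˣ) : R) • a + (s * (v ⬝ᵥ a)) • a = 0 := by
    linear_combination (norm := module) hs • a
  rw [hcoeff, zero_vecMulVec, add_zero, one_smul]

def vecMulVecSubgroup (v : n → R) (J : Ideal R) : Subgroup (Matrix n n R)ˣ where
  carrier := {M | ∃ (u : Rˣ) (c : n → R), (∀ i, c i ∈ J) ∧
    (M : Matrix n n R) = (u : R) • 1 + vecMulVec c v}
  one_mem' := ⟨1, 0, fun _ => J.zero_mem, by simp⟩
  mul_mem' := by
    rintro M N ⟨u, a, ha, hM⟩ ⟨u', c, hc, hN⟩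
    refine ⟨u * u', (u : R) • c + (u' : R) • a + (v ⬝ᵥ c) • a, fun i => ?_, ?_⟩
    · exact J.add_mem (J.add_mem (J.mul_mem_left _ (hc i)) (J.mul_mem_left _ (ha i)))
        (J.mul_mem_left _ (ha i))
    · rw [Units.val_mul, Units.val_mul, hM, hN, smul_one_add_vecMulVec_mul]
  inv_mem' := by
    rintro M ⟨u, a, ha, hM⟩
    obtain ⟨s, hinv⟩ := exists_val_inv_eq_smul_one_add_vecMulVec hM
    exact ⟨u⁻¹, s • a, fun i => J.mul_mem_left _ (ha i), hinv⟩

theorem vecMulVecSubgroup_mono (v : n → R) {J J' : Ideal R} (hJ : J ≤ J') :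
    vecMulVecSubgroup v J ≤ vecMulVecSubgroup v J' :=
  fun _ ⟨u, c, hc, hM⟩ => ⟨u, c, fun i => hJ (hc i), hM⟩

theorem commutator_vecMulVecSubgroup_le {I J₁ J₂ : Ideal R} {v : n → R} (hv : ∀ i, v i ∈ I) :
    ⁅vecMulVecSubgroup v J₁, vecMulVecSubgroup v J₂⁆ ≤ vecMulVecSubgroup v (I * J₁ * J₂) := by
  rw [Subgroup.commutator_le]
  intro g hg h hh
  obtain ⟨s, e, -, hinv⟩ := (vecMulVecSubgroup v ⊤).inv_mem
    (mul_mem (vecMulVecSubgroup_mono v le_top hh) (vecMulVecSubgroup_mono v le_top hg))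
  obtain ⟨u, a, ha, hg⟩ := hg
  obtain ⟨u', c, hc, hh⟩ := hh
  set d := (v ⬝ᵥ c) • a - (v ⬝ᵥ a) • c
  have hgh : ((g * h : (Matrix n n R)ˣ) : Matrix n n R) = ↑(h * g) + vecMulVec d v := by
    rw [Units.val_mul, Units.val_mul, hg, hh, smul_one_add_vecMulVec_mul,
      smul_one_add_vecMulVec_mul, mul_comm (u : R), add_assoc ((_ : R) • (1 : Matrix n n R)),
      ← add_vecMulVec]
    congr 2
    module
  refine ⟨1, ((s : R) + v ⬝ᵥ e) • d, fun i => Ideal.mul_mem_left _ _ (sub_mem ?_ ?_), ?_⟩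
  · rw [mul_right_comm]
    exact Ideal.mul_mem_mul (dotProduct_mem_mul hv hc) (ha i)
  · exact Ideal.mul_mem_mul (dotProduct_mem_mul hv ha) (hc i)
  · rw [commutatorElement_def, show g * h * g⁻¹ * h⁻¹ = g * h * (h * g)⁻¹ by group,
      Units.val_mul, hgh, add_mul, Units.mul_inv, hinv, mul_add, Matrix.mul_smul, Matrix.mul_one,
      vecMulVec_mul_vecMulVec, vecMulVec_smul, smul_vecMulVec, add_smul, Units.val_one, one_smul]

end Matrix

theorem aug_U (m : Multiplicative (ℤ × ℤ)) : aug (U m) = 1 := by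
  simp [aug, U]

theorem U_ne_one {m : Multiplicative (ℤ × ℤ)} (hm : m ≠ 1) : (U m : R2) ≠ 1 := by
  intro h
  exact hm (AddMonoidAlgebra.of_injective (h.trans (map_one (AddMonoidAlgebra.of ℤ _)).symm))

theorem vv_mem_Saug (i : Fin 2) : vv i ∈ Saug := by
  fin_cases i <;> simp [vv, Saug, Xr, Yr, xu, yu, aug_U]

theorem vv_ne_zero (i : Fin 2) : vv i ≠ 0 := by
  fin_cases i <;> simp [vv, sub_eq_zero, Xr, Yr, xu, yu, (U_ne_one _).symm]

theorem Nmat_eq_vecMulVec (a b : R2) : Nmat a b = vecMulVec ![a, b] vv := by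
  ext i j
  fin_cases i <;> fin_cases j <;> rfl

theorem M1_eq : M1 = (xu : R2) • 1 + vecMulVec ![1, 0] vv := by
  ext i j
  fin_cases i <;> fin_cases j <;> simp [M1, vv, Xr]

theorem M2_eq : M2 = (yu : R2) • 1 + vecMulVec ![0, 1] vv := by
  ext i j
  fin_cases i <;> fin_cases j <;> simp [M2, vv, Yr]

theorem lcs_le_vecMulVecSubgroup (m1 m2 : (Matrix (Fin 2) (Fin 2) R2)ˣ)
    (h1 : (m1 : Matrix (Fin 2) (Fin 2) R2) = M1) (h2 : (m2 : Matrix (Fin 2) (Fin 2) R2) = M2) :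
    ∀ k, lcs (Subgroup.closure {m1, m2}) k ≤ vecMulVecSubgroup vv (Saug ^ k) := by
  have hgen : Subgroup.closure {m1, m2} ≤ vecMulVecSubgroup vv (Saug ^ 0) := by
    rw [pow_zero, Ideal.one_eq_top, Subgroup.closure_le, Set.insert_subset_iff,
      Set.singleton_subset_iff]
    exact ⟨⟨xu, ![1, 0], fun _ => Submodule.mem_top, h1.trans M1_eq⟩,
      ⟨yu, ![0, 1], fun _ => Submodule.mem_top, h2.trans M2_eq⟩⟩
  refine lcs_le_of_commutator_le hgen fun k => ?_
  calc ⁅Subgroup.closure {m1, m2}, vecMulVecSubgroup vv (Saug ^ k)⁆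
      ≤ ⁅vecMulVecSubgroup vv (Saug ^ 0), vecMulVecSubgroup vv (Saug ^ k)⁆ :=
        Subgroup.commutator_mono hgen le_rfl
    _ ≤ vecMulVecSubgroup vv (Saug * Saug ^ 0 * Saug ^ k) :=
        commutator_vecMulVecSubgroup_le vv_mem_Saug
    _ = vecMulVecSubgroup vv (Saug ^ (k + 1)) := by ring_nf

theorem lower_central_coefficients_general
    (m1 m2 : (Matrix (Fin 2) (Fin 2) R2)ˣ)
    (h1 : (m1 : Matrix (Fin 2) (Fin 2) R2) = M1)
    (h2 : (m2 : Matrix (Fin 2) (Fin 2) R2) = M2)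
    (j : ℕ)
    (M : (Matrix (Fin 2) (Fin 2) R2)ˣ)
    (hM : M ∈ lcs (Subgroup.closure {m1, m2}) (j - 1))
    (u : R2ˣ) (l1 l2 : R2)
    (hform : (M : Matrix (Fin 2) (Fin 2) R2) =
      (u : R2) • (1 : Matrix (Fin 2) (Fin 2) R2) + Nmat l1 l2) :
    l1 ∈ Saug ^ (j - 1) ∧ l2 ∈ Saug ^ (j - 1) := by
  obtain ⟨u', c, hc, hMc⟩ := lcs_le_vecMulVecSubgroup m1 m2 h1 h2 (j - 1) hM
  have hvv : ∀ i : Fin 2, ∃ k ≠ i, vv k ≠ 0 := fun i =>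
    ⟨i + 1, by fin_cases i <;> decide, vv_ne_zero _⟩
  obtain rfl : ![l1, l2] = c := vecMulVec_left_eq_of_smul_one_add_eq hvv
    (by rw [← Nmat_eq_vecMulVec, ← hform, hMc])
  exact ⟨hc 0, hc 1⟩

/-- If `M = uI + N` lies in the `j`-th term of the lower central series of `F(ℛ)`
(`j ≥ 2`), then the coefficients `λ₁, λ₂` of `N` lie in `Σ^(j-1)`. -/
theorem lower_central_coefficients
    (m1 m2 : (Matrix (Fin 2) (Fin 2) R2)ˣ)
    (h1 : (m1 : Matrix (Fin 2) (Fin 2) R2) = M1)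
    (h2 : (m2 : Matrix (Fin 2) (Fin 2) R2) = M2)
    (j : ℕ) (hj : 2 ≤ j)
    (M : (Matrix (Fin 2) (Fin 2) R2)ˣ)
    (hM : M ∈ lcs (Subgroup.closure {m1, m2}) (j - 1))
    (u : R2ˣ) (l1 l2 : R2)
    (hform : (M : Matrix (Fin 2) (Fin 2) R2) =
      (u : R2) • (1 : Matrix (Fin 2) (Fin 2) R2) + Nmat l1 l2) :
    l1 ∈ Saug ^ (j - 1) ∧ l2 ∈ Saug ^ (j - 1) :=
  lower_central_coefficients_general m1 m2 h1 h2 j M hM u l1 l2 hform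
end
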